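/- Let p be an odd prime and let CM(G, X, q) be a p-valent regular anti-balanced Cayley map on a finite abelian group G. Then CM(G, X, q) is isomorphic to the Cayley map CM(ℤ/2p, X₂, q₂), where X₂ = {1, 3, 5, …, 2p−1} is the set of odd residues in ℤ/2p and q₂ is the permutation of X₂ given by q₂(x) = x + 2. -/

import Mathlib

/-- A Cayley map `CM(G, X, q)`: a finite subset `X` of `G` with `1 ∉ X`,
closed under inverses, generating `G`, together with a permutation `q` of `X`
acting on `X` as a single cycle of length `|X|`. -/
structure CayleyMapData (G : Type*) [Group G] where
  X : Finset G
  one_not_mem : (1 : G) ∉ X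
  inv_mem : ∀ x ∈ X, x⁻¹ ∈ X
  gen : Subgroup.closure (X : Set G) = ⊤
  q : Equiv.Perm {x : G // x ∈ X}
  single_cycle : ∀ x y : {x : G // x ∈ X}, ∃ k : ℕ, (q ^ k) x = y

namespace CayleyMapData

variable {G : Type*} [Group G] (M : CayleyMapData G)

/-- The rotation `R(g, x) = (g, q(x))` on the arc set `G × X`. -/
def rotation : Equiv.Perm (G × {x : G // x ∈ M.X}) :=
  (Equiv.refl G).prodCongr M.q

/-- The arc-reversing involution `L(g, x) = (g·x, x⁻¹)` on the arc set `G × X`. -/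
def invol : Equiv.Perm (G × {x : G // x ∈ M.X}) where
  toFun d := (d.1 * d.2.1, ⟨(d.2.1 : G)⁻¹, M.inv_mem _ d.2.2⟩)
  invFun d := (d.1 * d.2.1, ⟨(d.2.1 : G)⁻¹, M.inv_mem _ d.2.2⟩)
  left_inv := by rintro ⟨g, x, hx⟩; simp
  right_inv := by rintro ⟨g, x, hx⟩; simp

/-- The Cayley map is regular: the monodromy group `⟨R, L⟩` acts sharply
transitively on the arc set. -/
def IsRegular : Prop :=
  ∀ d d' : G × {x : G // x ∈ M.X},
    ∃! m : Subgroup.closure ({M.rotation, M.invol} :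
        Set (Equiv.Perm (G × {x : G // x ∈ M.X}))),
      (m : Equiv.Perm (G × {x : G // x ∈ M.X})) d = d'

/-- Balanced: `(q x)⁻¹ = q (x⁻¹)` for all `x ∈ X`. -/
def IsBalanced : Prop :=
  ∀ x : {x : G // x ∈ M.X},
    ((M.q x : G))⁻¹ = (M.q ⟨(x : G)⁻¹, M.inv_mem _ x.2⟩ : G)

/-- Anti-balanced: `(q x)⁻¹ = q⁻¹ (x⁻¹)` for all `x ∈ X`. -/
def IsAntiBalanced : Prop :=
  ∀ x : {x : G // x ∈ M.X},
    ((M.q x : G))⁻¹ = (M.q⁻¹ ⟨(x : G)⁻¹, M.inv_mem _ x.2⟩ : G)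

end CayleyMapData

/-!
For an anti-balanced map the monodromy element `T = L R L R` acts by
`T (g, x) = (g * (q x * x⁻¹), x)`. As `|X| = p` is odd, `X` contains an involution `x₀`, and
anti-balance gives `q⁻¹ x₀ = (q x₀)⁻¹`; in an abelian group this makes `R T` and `T R` agree on
the arc `(1, q⁻¹ x₀)`, so by regularity `R T = T R`. Hence `q x * x⁻¹` is invariant under `q`,
so `q` is multiplication by a fixed `d`, `X = {dᵏ x₀}` and `d` has order `p`. Then
`w = x₀ d^((p+1)/2)` has order `2p`, `w² = d`, `wᵖ = x₀`, and `w` generates `G` because `X`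
does; the isomorphism `G ≃ ℤ/2p` sending `w` to `1` carries `X` to the odd residues and `q` to
`x ↦ x + 2`.
-/

theorem Finset.exists_inv_eq_self_of_odd_card {α : Type*} [InvolutiveInv α] {s : Finset α}
    (hs : ∀ x ∈ s, x⁻¹ ∈ s) (hodd : Odd s.card) : ∃ x ∈ s, x⁻¹ = x := by
  let σ : Equiv.Perm s :=
    (Equiv.inv α).subtypePerm fun x => ⟨fun h => inv_inv x ▸ hs _ h, hs x⟩
  have hσ : σ ^ 2 ^ 1 = 1 := by ext; simp [σ, sq]
  obtain ⟨⟨x, hx⟩, hfix⟩ := Equiv.Perm.exists_fixed_point_of_prime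
    (by simpa [← even_iff_two_dvd] using hodd) hσ
  exact ⟨x, hx, congrArg Subtype.val hfix⟩

theorem exists_orderOf_eq_two_mul {M : Type*} [Monoid M] {a b : M} {n : ℕ} (hab : Commute a b)
    (ha : orderOf a = 2) (hb : orderOf b = n) (hn : Odd n) :
    ∃ w : M, orderOf w = 2 * n ∧ w ^ 2 = b ∧ w ^ n = a := by
  obtain ⟨k, rfl⟩ := hn
  have ha2 : a ^ 2 = 1 := ha ▸ pow_orderOf_eq_one a
  have hbn : b ^ (2 * k + 1) = 1 := hb ▸ pow_orderOf_eq_one b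
  -- `k + 1` is the inverse of `2` modulo `2 * k + 1`
  refine ⟨a * b ^ (k + 1), ?_, ?_, ?_⟩
  · have hcop : (orderOf b).Coprime (k + 1) := by
      rw [hb, show 2 * k + 1 = k + (k + 1) by ring, Nat.coprime_add_self_left,
        Nat.coprime_self_add_right]
      exact Nat.coprime_one_right k
    have hbk : orderOf (b ^ (k + 1)) = 2 * k + 1 := hcop.orderOf_pow.trans hb
    have h2 : (2 : ℕ).Coprime (2 * k + 1) := Nat.coprime_two_left.mpr (odd_two_mul_add_one k)
    rw [(hab.pow_right _).orderOf_mul_eq_mul_orderOf_of_coprime (by rwa [ha, hbk]), ha, hbk]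
  · rw [(hab.pow_right _).mul_pow, ha2, one_mul, ← pow_mul,
      show (k + 1) * 2 = 2 * k + 1 + 1 by ring, pow_succ, hbn, one_mul]
  · rw [(hab.pow_right _).mul_pow, ← pow_mul, mul_comm (k + 1), pow_mul, hbn, one_pow, mul_one,
      pow_succ, pow_mul, ha2, one_pow, one_mul]

namespace ZMod

def parity (m : ℕ) : ZMod (2 * m) →+* ZMod 2 := castHom (dvd_mul_right 2 m) (ZMod 2)

theorem parity_apply (m : ℕ) [NeZero m] (a : ZMod (2 * m)) : parity m a = (a.val : ZMod 2) := by
  rw [parity, castHom_apply, cast_eq_val]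

theorem odd_val_iff_parity_eq_one {m : ℕ} [NeZero m] (a : ZMod (2 * m)) :
    Odd a.val ↔ parity m a = 1 := by
  rw [parity_apply, natCast_eq_one_iff_odd]

end ZMod

namespace CayleyMapData

section Group

variable {G : Type*} [Group G] (M : CayleyMapData G)

@[simp]
theorem rotation_apply (g : G) (x : {x : G // x ∈ M.X}) : M.rotation (g, x) = (g, M.q x) := rfl

@[simp]
theorem invol_apply (g : G) (x : {x : G // x ∈ M.X}) :
    M.invol (g, x) = (g * x, ⟨(x : G)⁻¹, M.inv_mem _ x.2⟩) := rfl

def monodromy : Subgroup (Equiv.Perm (G × {x : G // x ∈ M.X})) :=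
  Subgroup.closure {M.rotation, M.invol}

theorem rotation_mem_monodromy : M.rotation ∈ M.monodromy :=
  Subgroup.subset_closure (Set.mem_insert _ _)

theorem invol_mem_monodromy : M.invol ∈ M.monodromy :=
  Subgroup.subset_closure (Set.mem_insert_of_mem _ rfl)

theorem eq_of_forall_apply_q_eq {α : Type*} (f : {x : G // x ∈ M.X} → α)
    (hf : ∀ x, f (M.q x) = f x) (x y : {x : G // x ∈ M.X}) : f y = f x := by
  obtain ⟨k, rfl⟩ := M.single_cycle x y
  induction k with
  | zero => rfl
  | succ k ih => rw [pow_succ', Equiv.Perm.mul_apply, hf, ih]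

def IsTranslation (d : G) : Prop :=
  ∀ x : {x : G // x ∈ M.X}, (M.q x : G) = d * x

variable {M}

theorem IsRegular.eq_of_apply_eq (hreg : M.IsRegular)
    {m m' : Equiv.Perm (G × {x : G // x ∈ M.X})} (hm : m ∈ M.monodromy) (hm' : m' ∈ M.monodromy)
    {a : G × {x : G // x ∈ M.X}} (h : m a = m' a) : m = m' := by
  obtain ⟨_, -, huniq⟩ := hreg a (m a)
  exact congrArg Subtype.val ((huniq ⟨m, hm⟩ rfl).trans (huniq ⟨m', hm'⟩ h.symm).symm)

theorem IsAntiBalanced.invol_mul_rotation_mul_invol_mul_rotation_apply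
    (hanti : M.IsAntiBalanced) (g : G) (x : {x : G // x ∈ M.X}) :
    (M.invol * M.rotation * M.invol * M.rotation) (g, x) = (g * (M.q x * (x : G)⁻¹), x) := by
  have hqx : M.q ⟨(M.q x : G)⁻¹, M.inv_mem _ (M.q x).2⟩ = ⟨(x : G)⁻¹, M.inv_mem _ x.2⟩ := by
    rw [← Equiv.Perm.eq_inv_iff_eq]
    exact Subtype.ext (hanti x)
  simp [hqx, mul_assoc]

namespace IsTranslation

variable {d : G}

theorem coe_q_pow_apply (hq : M.IsTranslation d) (k : ℕ) (x : {x : G // x ∈ M.X}) :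
    ((M.q ^ k) x : G) = d ^ k * x := by
  induction k with
  | zero => simp
  | succ k ih => rw [pow_succ', Equiv.Perm.mul_apply, hq, ih, pow_succ', mul_assoc]

theorem mem_X_iff (hq : M.IsTranslation d) {x₀ : G} (hx₀ : x₀ ∈ M.X) (g : G) :
    g ∈ M.X ↔ ∃ k : ℕ, g = d ^ k * x₀ := by
  constructor
  · intro hg
    obtain ⟨k, hk⟩ := M.single_cycle ⟨x₀, hx₀⟩ ⟨g, hg⟩
    exact ⟨k, (congrArg Subtype.val hk).symm.trans (hq.coe_q_pow_apply k _)⟩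
  · rintro ⟨k, rfl⟩
    have hk := ((M.q ^ k) ⟨x₀, hx₀⟩).2
    rwa [hq.coe_q_pow_apply] at hk

theorem card_X_eq_orderOf (hq : M.IsTranslation d) {x₀ : G} (hx₀ : x₀ ∈ M.X) :
    M.X.card = orderOf d := by
  classical
  have hfin : 0 < orderOf d := by
    have hqn : ((M.q ^ orderOf M.q) ⟨x₀, hx₀⟩ : G) = x₀ := by rw [pow_orderOf_eq_one]; rfl
    rw [hq.coe_q_pow_apply, mul_eq_right] at hqn
    exact orderOf_pos_iff.mpr (isOfFinOrder_iff_pow_eq_one.mpr ⟨_, orderOf_pos M.q, hqn⟩)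
  have hX : M.X = (Finset.range (orderOf d)).image (fun k => d ^ k * x₀) := by
    ext g
    simp only [hq.mem_X_iff hx₀, Finset.mem_image, Finset.mem_range]
    constructor
    · rintro ⟨k, rfl⟩
      exact ⟨k % orderOf d, Nat.mod_lt _ hfin, by rw [pow_mod_orderOf]⟩
    · rintro ⟨k, -, rfl⟩
      exact ⟨k, rfl⟩
  rw [hX, Finset.card_image_of_injOn, Finset.card_range]
  intro i hi j hj hij
  exact pow_injOn_Iio_orderOf (by simpa using hi) (by simpa using hj) (mul_right_cancel hij)

end IsTranslation

end Group

theorem IsRegular.exists_isTranslation {G : Type*} [CommGroup G] {M : CayleyMapData G}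
    (hreg : M.IsRegular) (hanti : M.IsAntiBalanced) {x₀ : {x : G // x ∈ M.X}}
    (hx₀ : (x₀ : G)⁻¹ = x₀) : ∃ d : G, M.IsTranslation d := by
  set T := M.invol * M.rotation * M.invol * M.rotation
  have hT : ∀ g x, T (g, x) = (g * (M.q x * (x : G)⁻¹), x) :=
    hanti.invol_mul_rotation_mul_invol_mul_rotation_apply
  have hTmem : T ∈ M.monodromy := by
    have hL := M.invol_mem_monodromy
    have hR := M.rotation_mem_monodromy
    exact mul_mem (mul_mem (mul_mem hL hR) hL) hR
  have hback : ((M.q.symm x₀ : {x : G // x ∈ M.X}) : G) = (M.q x₀ : G)⁻¹ := by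
    rw [hanti x₀]
    congr 3
    exact Subtype.ext hx₀.symm
  have hcomm : M.rotation * T = T * M.rotation := by
    refine hreg.eq_of_apply_eq (mul_mem M.rotation_mem_monodromy hTmem)
      (mul_mem hTmem M.rotation_mem_monodromy) (a := (1, M.q⁻¹ x₀)) ?_
    simp [hT, hback, hx₀, mul_comm]
  refine ⟨M.q x₀ * (x₀ : G)⁻¹, fun x => ?_⟩
  have hinv : ∀ y, (M.q (M.q y) : G) * (M.q y : G)⁻¹ = M.q y * (y : G)⁻¹ := fun y => by
    simpa [hT] using (congrArg (fun σ => (σ (1, y)).1) hcomm).symm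
  have hconst := M.eq_of_forall_apply_q_eq (fun y => (M.q y : G) * (y : G)⁻¹) hinv x₀ x
  rw [← hconst, inv_mul_cancel_right]

def oddResidues (m : ℕ) [NeZero m] : CayleyMapData (Multiplicative (ZMod (2 * m))) where
  X := Finset.univ.filter fun x : Multiplicative (ZMod (2 * m)) => Odd (Multiplicative.toAdd x).val
  one_not_mem := by simp
  inv_mem x := by
    simp only [Finset.mem_filter, Finset.mem_univ, true_and, ZMod.odd_val_iff_parity_eq_one,
      toAdd_inv, map_neg]
    intro hx
    rw [hx]
    decide
  gen := by
    have h1 : Multiplicative.ofAdd (1 : ZMod (2 * m)) ∈ Finset.univ.filter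
        fun x : Multiplicative (ZMod (2 * m)) => Odd (Multiplicative.toAdd x).val := by
      rw [Finset.mem_filter, toAdd_ofAdd, ZMod.odd_val_iff_parity_eq_one]
      exact ⟨Finset.mem_univ _, (ZMod.parity m).map_one⟩
    refine eq_top_iff.mpr fun g _ => Subgroup.closure_mono (Set.singleton_subset_iff.mpr h1) ?_
    obtain ⟨k, hk⟩ := ZMod.intCast_surjective (Multiplicative.toAdd g)
    exact Subgroup.mem_closure_singleton.mpr ⟨k, by rw [← ofAdd_zsmul, zsmul_one, hk, ofAdd_toAdd]⟩
  q := (Equiv.mulRight (Multiplicative.ofAdd 2)).subtypePerm fun x => by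
    have h2 : ZMod.parity m 2 = 0 := by rw [map_ofNat]; decide
    simp [ZMod.odd_val_iff_parity_eq_one, h2]
  single_cycle x y := by
    have hxy : Even (Multiplicative.toAdd y.1 - Multiplicative.toAdd x.1).val := by
      have hx := x.2
      have hy := y.2
      simp only [Finset.mem_filter, Finset.mem_univ, true_and,
        ZMod.odd_val_iff_parity_eq_one] at hx hy
      rw [← ZMod.natCast_eq_zero_iff_even, ← ZMod.parity_apply, map_sub, hx, hy, sub_self]
    obtain ⟨k, hk⟩ := hxy
    refine ⟨k, Subtype.ext ?_⟩
    simp only [Equiv.Perm.subtypePerm_pow, Equiv.pow_mulRight, Equiv.Perm.subtypePerm_apply,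
      Equiv.coe_mulRight]
    rw [← ofAdd_nsmul, nsmul_eq_mul, mul_two, ← Nat.cast_add, ← hk, ZMod.natCast_zmod_val,
      ofAdd_sub, ofAdd_toAdd, ofAdd_toAdd, mul_div_cancel]

theorem oddResidues_isTranslation (m : ℕ) [NeZero m] :
    (oddResidues m).IsTranslation (Multiplicative.ofAdd 2) :=
  fun _ => mul_comm _ _

theorem ofAdd_natCast_mem_oddResidues {m k : ℕ} [NeZero m] (hk : Odd k) :
    Multiplicative.ofAdd (k : ZMod (2 * m)) ∈ (oddResidues m).X := by
  rw [oddResidues, Finset.mem_filter, toAdd_ofAdd, ZMod.odd_val_iff_parity_eq_one,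
    map_natCast (ZMod.parity m)]
  exact ⟨Finset.mem_univ _, ZMod.natCast_eq_one_iff_odd.mpr hk⟩

section Transport

variable {G G' : Type*} [Group G] [Group G'] {M : CayleyMapData G} {M' : CayleyMapData G'}
  (ψ : G ≃* G')

theorem IsTranslation.mem_X_iff_map_mem_X {d : G} (hq : M.IsTranslation d)
    (hq' : M'.IsTranslation (ψ d)) {x₀ : G} (hx₀ : x₀ ∈ M.X) (hx₀' : ψ x₀ ∈ M'.X) (g : G) :
    g ∈ M.X ↔ ψ g ∈ M'.X := by
  rw [hq.mem_X_iff hx₀, hq'.mem_X_iff hx₀']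
  simp only [← map_pow, ← map_mul, ψ.injective.eq_iff]

def arcCongr (hX : ∀ g, g ∈ M.X ↔ ψ g ∈ M'.X) :
    G × {x : G // x ∈ M.X} ≃ G' × {y : G' // y ∈ M'.X} :=
  ψ.toEquiv.prodCongr (ψ.toEquiv.subtypeEquiv hX)

theorem arcCongr_invol (hX : ∀ g, g ∈ M.X ↔ ψ g ∈ M'.X) (a : G × {x : G // x ∈ M.X}) :
    arcCongr ψ hX (M.invol a) = M'.invol (arcCongr ψ hX a) := by
  obtain ⟨g, x⟩ := a
  ext <;> simp [arcCongr]

theorem arcCongr_rotation (hX : ∀ g, g ∈ M.X ↔ ψ g ∈ M'.X) {d : G} (hq : M.IsTranslation d)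
    (hq' : M'.IsTranslation (ψ d)) (a : G × {x : G // x ∈ M.X}) :
    arcCongr ψ hX (M.rotation a) = M'.rotation (arcCongr ψ hX a) := by
  obtain ⟨g, x⟩ := a
  ext <;> simp [arcCongr, hq x, hq' ⟨ψ x, (hX x).1 x.2⟩]

end Transport

end CayleyMapData

open CayleyMapData

theorem prime_valent_regular_antibalanced_cayley_map_abelian_general
    {G : Type*} [CommGroup G] (p : ℕ) [hp : Fact p.Prime] (hodd : Odd p)
    (M : CayleyMapData G) (hval : M.X.card = p) (hreg : M.IsRegular)
    (hanti : M.IsAntiBalanced) :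
    ∃ (M₂ : CayleyMapData (Multiplicative (ZMod (2 * p))))
      (e : (G × {x : G // x ∈ M.X}) ≃
        (Multiplicative (ZMod (2 * p)) ×
          {x : Multiplicative (ZMod (2 * p)) // x ∈ M₂.X})),
      M₂.X = Finset.univ.filter
        (fun x : Multiplicative (ZMod (2 * p)) => Odd (Multiplicative.toAdd x).val) ∧
      (∀ x : {x : Multiplicative (ZMod (2 * p)) // x ∈ M₂.X},
        Multiplicative.toAdd ((M₂.q x : Multiplicative (ZMod (2 * p)))) =
          Multiplicative.toAdd (x : Multiplicative (ZMod (2 * p))) + 2) ∧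
      (∀ d, e (M.rotation d) = M₂.rotation (e d)) ∧
      (∀ d, e (M.invol d) = M₂.invol (e d)) := by
  obtain ⟨x₀, hx₀X, hx₀⟩ := M.X.exists_inv_eq_self_of_odd_card M.inv_mem (hval ▸ hodd)
  obtain ⟨d, hq⟩ := hreg.exists_isTranslation hanti (x₀ := ⟨x₀, hx₀X⟩) hx₀
  have hd : orderOf d = p := hval ▸ (hq.card_X_eq_orderOf hx₀X).symm
  have hx₀2 : orderOf x₀ = 2 :=
    orderOf_eq_prime (by rw [sq, mul_eq_one_iff_eq_inv, hx₀]) fun h => M.one_not_mem (h ▸ hx₀X)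
  obtain ⟨w, hw, hw2, hwp⟩ := exists_orderOf_eq_two_mul (Commute.all x₀ d) hx₀2 hd hodd
  have hgen : ∀ g, g ∈ Subgroup.zpowers w := by
    rw [← Subgroup.eq_top_iff', eq_top_iff, ← M.gen, Subgroup.closure_le]
    intro x hx
    obtain ⟨k, rfl⟩ := (hq.mem_X_iff hx₀X x).1 hx
    rw [← hw2, ← hwp]
    exact mul_mem (pow_mem (pow_mem (Subgroup.mem_zpowers w) _) _)
      (pow_mem (Subgroup.mem_zpowers w) _)
  set ψ := (zmodMulEquivOfGenerator hgen
    (hw ▸ (orderOf_eq_card_of_forall_mem_zpowers hgen).symm)).symm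
  have hψ (k : ℕ) : ψ (w ^ k) = Multiplicative.ofAdd (k : ZMod (2 * p)) := by
    simpa only [zpow_natCast, Int.cast_natCast] using
      zmodMulEquivOfGenerator_symm_apply_zpow hgen _ k
  have hq' : (oddResidues p).IsTranslation (ψ d) := by
    rw [← hw2, hψ, Nat.cast_ofNat]
    exact oddResidues_isTranslation p
  have hX := hq.mem_X_iff_map_mem_X ψ hq' hx₀X
    (by rw [← hwp, hψ]; exact ofAdd_natCast_mem_oddResidues hodd)
  exact ⟨oddResidues p, arcCongr ψ hX, rfl, fun _ => rfl, arcCongr_rotation ψ hX hq hq',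
    arcCongr_invol ψ hX⟩

/-- A `p`-valent regular anti-balanced Cayley map on a finite abelian group
(`p` an odd prime) is isomorphic to `CM(ℤ/2p, {1,3,…,2p-1}, x ↦ x+2)`
(the cyclic group `ℤ/2p` written multiplicatively): there is a bijection of
arc sets commuting with the rotations and with the arc-reversing involutions. -/
theorem prime_valent_regular_antibalanced_cayley_map_abelian
    {G : Type*} [CommGroup G] [Fintype G] (p : ℕ) [hp : Fact p.Prime] (hodd : Odd p)
    (M : CayleyMapData G) (hval : M.X.card = p) (hreg : M.IsRegular)
    (hanti : M.IsAntiBalanced) :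
    ∃ (M₂ : CayleyMapData (Multiplicative (ZMod (2 * p))))
      (e : (G × {x : G // x ∈ M.X}) ≃
        (Multiplicative (ZMod (2 * p)) ×
          {x : Multiplicative (ZMod (2 * p)) // x ∈ M₂.X})),
      M₂.X = Finset.univ.filter
        (fun x : Multiplicative (ZMod (2 * p)) => Odd (Multiplicative.toAdd x).val) ∧
      (∀ x : {x : Multiplicative (ZMod (2 * p)) // x ∈ M₂.X},
        Multiplicative.toAdd ((M₂.q x : Multiplicative (ZMod (2 * p)))) =
          Multiplicative.toAdd (x : Multiplicative (ZMod (2 * p))) + 2) ∧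
      (∀ d, e (M.rotation d) = M₂.rotation (e d)) ∧
      (∀ d, e (M.invol d) = M₂.invol (e d)) :=
  prime_valent_regular_antibalanced_cayley_map_abelian_general p (hp := hp) hodd M hval hreg hanti
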